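/- Let α ∈ (1,2) and let ρ, σ be density operators. Define the Quantum Chernoff Coefficient Q(ρ,σ) = inf_{0<s<1} Tr[ρ^s σ^(1-s)] and the pretty good fidelity F_pg(ρ,σ) = Tr[ρ^(1/2) σ^(1/2)]. For any two states ρ₀, ρ₁ on a finite-dimensional Hilbert space, define ρ̃₀ = (1/2)(ρ₀ ⊗ |0⟩⟨0| + ρ₁ ⊗ |1⟩⟨1|) and ρ̃₁ = (1/2)(ρ₁ ⊗ |0⟩⟨0| + ρ₀ ⊗ |1⟩⟨1|). Then Q(ρ̃₀, ρ̃₁) = F_pg(ρ₀, ρ₁). -/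

import Mathlib

open Matrix Kronecker
open scoped ComplexOrder

/-- Fractional power of a matrix via the continuous functional calculus. -/
noncomputable def mpow {m : Type*} [Fintype m] [DecidableEq m]
    (A : Matrix m m ℂ) (r : ℝ) : Matrix m m ℂ :=
  cfc (fun x : ℝ => x ^ r) A

/-!
Write `ρ̃₀ = ½ diag(ρ₀, ρ₁)` and `ρ̃₁ = ½ diag(ρ₁, ρ₀)`. Swapping the two flag values maps `ρ̃₀` to
`ρ̃₁` and back, so `Tr[ρ̃₀^s ρ̃₁^(1-s)] = Tr[ρ̃₀^(1-s) ρ̃₁^s]`. In the eigenbases of `ρ̃₀` and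
`ρ̃₁` the trace `Tr[ρ̃₀^s ρ̃₁^(1-s)]` is `∑ λᵢ^s μⱼ^(1-s) |⟨uᵢ, vⱼ⟩|²`, so by AM-GM on each term
their common value is at least `Tr[ρ̃₀^(1/2) ρ̃₁^(1/2)]`: the infimum is attained at
`s = 1/2`. There both square roots are block diagonal, and the trace is `Tr[ρ₀^(1/2) ρ₁^(1/2)]`.
-/

lemma Real.two_mul_rpow_half_mul_rpow_half_le {a b : ℝ} (ha : 0 ≤ a) (hb : 0 ≤ b) (s : ℝ) :
    2 * (a ^ (1 / 2 : ℝ) * b ^ (1 / 2 : ℝ)) ≤ a ^ s * b ^ (1 - s) + a ^ (1 - s) * b ^ s := by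
  have hprod : a ^ s * b ^ (1 - s) * (a ^ (1 - s) * b ^ s) = a * b := by
    rw [mul_mul_mul_comm, ← rpow_add' ha (by norm_num), ← rpow_add' hb (by norm_num)]
    norm_num
  calc 2 * (a ^ (1 / 2 : ℝ) * b ^ (1 / 2 : ℝ))
      = 2 * ((a ^ s * b ^ (1 - s)) ^ (1 / 2 : ℝ) * (a ^ (1 - s) * b ^ s) ^ (1 / 2 : ℝ)) := by
        rw [← mul_rpow ha hb, ← mul_rpow (by positivity) (by positivity), hprod]
    _ ≤ 2 * (1 / 2 * (a ^ s * b ^ (1 - s)) + 1 / 2 * (a ^ (1 - s) * b ^ s)) := by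
        gcongr
        exact geom_mean_le_arith_mean2_weighted (by norm_num) (by norm_num) (by positivity)
          (by positivity) (by norm_num)
    _ = a ^ s * b ^ (1 - s) + a ^ (1 - s) * b ^ s := by ring

lemma ciInf_eq_of_forall_le {ι α : Type*} [ConditionallyCompleteLattice α] {f : ι → α}
    (i₀ : ι) (h : ∀ i, f i₀ ≤ f i) : ⨅ i, f i = f i₀ :=
  have : Nonempty ι := ⟨i₀⟩
  le_antisymm (ciInf_le ⟨f i₀, Set.forall_mem_range.2 h⟩ i₀) (le_ciInf h)

namespace Matrix

section Reindex

variable {𝕜 : Type*} [RCLike 𝕜] {m n : Type*} [Fintype m] [Fintype n]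

lemma trace_reindex {R : Type*} [AddCommMonoid R] (e : m ≃ n) (A : Matrix m m R) :
    trace (reindex e e A) = trace A :=
  e.symm.sum_comp fun i => A i i

variable [DecidableEq m] [DecidableEq n]

def reindexStarAlgEquiv (e : m ≃ n) : Matrix m m 𝕜 ≃⋆ₐ[𝕜] Matrix n n 𝕜 :=
  { reindexAlgEquiv 𝕜 𝕜 e with
    map_smul' := map_smul (reindexAlgEquiv 𝕜 𝕜 e)
    map_star' := fun A => (conjTranspose_submatrix A _ _).symm }

lemma reindex_cfc (e : m ≃ n) (f : ℝ → ℝ) {A : Matrix m m 𝕜} (hA : IsSelfAdjoint A) :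
    reindex e e (cfc f A) = cfc f (reindex e e A) :=
  StarAlgHomClass.map_cfc (S := 𝕜) (reindexStarAlgEquiv e) f A
    (by rw [continuousOn_iff_continuous_domRestrict]; fun_prop)
    (continuous_id.matrix_reindex e e) hA (hA.map (reindexStarAlgEquiv e))

lemma trace_cfc_mul_cfc_comm_of_reindex (e : m ≃ m) {A B : Matrix m m 𝕜}
    (hA : IsSelfAdjoint A) (hB : IsSelfAdjoint B) (hAB : reindex e e A = B)
    (hBA : reindex e e B = A) (f g : ℝ → ℝ) :
    trace (cfc f A * cfc g B) = trace (cfc g A * cfc f B) := by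
  rw [← trace_reindex e, ← coe_reindexAlgEquiv 𝕜 𝕜, map_mul, coe_reindexAlgEquiv,
    reindex_cfc e f hA, reindex_cfc e g hB, hAB, hBA, trace_mul_comm]

end Reindex

section Spectral

variable {m : Type*} [Fintype m] [DecidableEq m]

lemma trace_diagonal_mul_mul_diagonal_mul_star {R : Type*} [CommRing R] [StarRing R]
    (d e : m → R) (W : Matrix m m R) :
    trace (diagonal d * W * diagonal e * star W) =
      ∑ i, ∑ j, d i * e j * (W i j * star (W i j)) := by
  simp only [trace, diag_apply, mul_apply, diagonal_apply, ite_mul, zero_mul, Finset.sum_ite_eq,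
    Finset.mem_univ, if_true, mul_ite, mul_zero, Finset.sum_ite_eq', star_apply]
  exact Finset.sum_congr rfl fun i _ => Finset.sum_congr rfl fun j _ => by ring

lemma IsHermitian.re_trace_cfc_mul_cfc {A B : Matrix m m ℂ} (hA : A.IsHermitian)
    (hB : B.IsHermitian) (f g : ℝ → ℝ) :
    (trace (cfc f A * cfc g B)).re = ∑ i, ∑ j, f (hA.eigenvalues i) * g (hB.eigenvalues j) *
      ‖(star (hA.eigenvectorUnitary : Matrix m m ℂ) * hB.eigenvectorUnitary) i j‖ ^ 2 := by
  set U : Matrix m m ℂ := ↑hA.eigenvectorUnitary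
  set V : Matrix m m ℂ := ↑hB.eigenvectorUnitary
  have hcycle : ∀ D E : Matrix m m ℂ,
      trace (U * D * star U * (V * E * star V)) =
        trace (D * (star U * V) * E * star (star U * V)) := by
    intro D E
    simp only [star_mul, star_star, mul_assoc]
    rw [trace_mul_comm U]
    simp only [mul_assoc]
  rw [hA.cfc_eq, hB.cfc_eq, IsHermitian.cfc, IsHermitian.cfc, Unitary.conjStarAlgAut_apply,
    Unitary.conjStarAlgAut_apply, hcycle, trace_diagonal_mul_mul_diagonal_mul_star,
    Complex.re_sum]
  refine Finset.sum_congr rfl fun i _ => ?_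
  rw [Complex.re_sum]
  refine Finset.sum_congr rfl fun j _ => ?_
  simp [Complex.mul_conj, Complex.normSq_eq_norm_sq, -Complex.ofReal_pow]

end Spectral

section KronDiag

variable {m : Type*}

def kronDiag {R : Type*} [CommSemiring R] (X Y : Matrix m m R) :
    Matrix (m × Fin 2) (m × Fin 2) R :=
  X ⊗ₖ single 0 0 1 + Y ⊗ₖ single 1 1 1

variable {R : Type*} [CommSemiring R]

lemma reindex_kronDiag (X Y : Matrix m m R) :
    reindex ((Equiv.refl m).prodCongr (Equiv.swap 0 1))
      ((Equiv.refl m).prodCongr (Equiv.swap 0 1)) (kronDiag X Y) = kronDiag Y X := by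
  ext ⟨i, k⟩ ⟨j, l⟩
  fin_cases k <;> fin_cases l <;> simp [kronDiag, single, add_comm]

variable [Fintype m]

lemma trace_kronDiag (X Y : Matrix m m R) : trace (kronDiag X Y) = trace X + trace Y := by
  simp [kronDiag, trace_kronecker]

lemma PosSemidef.kronDiag {X Y : Matrix m m ℂ} (hX : X.PosSemidef) (hY : Y.PosSemidef) :
    (kronDiag X Y).PosSemidef := by
  have hsingle : ∀ k : Fin 2, (single k k (1 : ℂ)).PosSemidef := fun k => by
    rw [← diagonal_single]
    exact PosSemidef.diagonal fun i => by simp only [Pi.single_apply]; split <;> norm_num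
  exact (hX.kronecker (hsingle 0)).add (hY.kronecker (hsingle 1))

variable [DecidableEq m]

lemma kronDiag_mul_kronDiag (X Y X' Y' : Matrix m m R) :
    kronDiag X Y * kronDiag X' Y' = kronDiag (X * X') (Y * Y') := by
  simp [kronDiag, add_mul, mul_add, ← mul_kronecker_mul, single_mul_single_same]

end KronDiag

section MatrixPower

variable {m : Type*} [Fintype m] [DecidableEq m]

lemma two_mul_re_trace_mpow_half_le {A B : Matrix m m ℂ} (hA : A.PosSemidef)
    (hB : B.PosSemidef) (s : ℝ) :
    2 * (trace (mpow A (1 / 2) * mpow B (1 / 2))).re ≤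
      (trace (mpow A s * mpow B (1 - s))).re + (trace (mpow A (1 - s) * mpow B s)).re := by
  simp only [mpow, hA.isHermitian.re_trace_cfc_mul_cfc hB.isHermitian, Finset.mul_sum, ← Finset.sum_add_distrib]
  gcongr with i _ j _
  have hamgm := Real.two_mul_rpow_half_mul_rpow_half_le (hA.eigenvalues_nonneg i)
    (hB.eigenvalues_nonneg j) s
  have hweight : 0 ≤ ‖(star (hA.isHermitian.eigenvectorUnitary : Matrix m m ℂ) *
      hB.isHermitian.eigenvectorUnitary) i j‖ ^ 2 := by positivity
  nlinarith

lemma re_trace_mpow_half_le_of_reindex (e : m ≃ m) {A B : Matrix m m ℂ} (hA : A.PosSemidef)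
    (hB : B.PosSemidef) (hAB : reindex e e A = B) (hBA : reindex e e B = A) (s : ℝ) :
    (trace (mpow A (1 / 2) * mpow B (1 / 2))).re ≤ (trace (mpow A s * mpow B (1 - s))).re := by
  have hsymm : trace (mpow A (1 - s) * mpow B s) = trace (mpow A s * mpow B (1 - s)) :=
    trace_cfc_mul_cfc_comm_of_reindex e hA.isHermitian hB.isHermitian hAB hBA _ _
  have hamgm := two_mul_re_trace_mpow_half_le hA hB s
  rw [hsymm] at hamgm
  linarith

open scoped MatrixOrder in
lemma mpow_half_eq_sqrt {A : Matrix m m ℂ} (hA : A.PosSemidef) : mpow A (1 / 2) = CFC.sqrt A := by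
  rw [CFC.sqrt_eq_rpow, CFC.rpow_eq_cfc_real hA.nonneg, mpow]

open scoped MatrixOrder in
lemma mpow_half_smul_kronDiag {A B : Matrix m m ℂ} (hA : A.PosSemidef) (hB : B.PosSemidef)
    {c : ℝ} (hc : 0 ≤ c) :
    mpow ((c : ℂ) • kronDiag A B) (1 / 2) =
      (√c : ℂ) • kronDiag (mpow A (1 / 2)) (mpow B (1 / 2)) := by
  have hsqrtA := nonneg_iff_posSemidef.mp (CFC.sqrt_nonneg A)
  have hsqrtB := nonneg_iff_posSemidef.mp (CFC.sqrt_nonneg B)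
  rw [mpow_half_eq_sqrt ((hA.kronDiag hB).smul (by exact_mod_cast hc)), mpow_half_eq_sqrt hA,
    mpow_half_eq_sqrt hB]
  refine CFC.sqrt_unique ?_ ((hsqrtA.kronDiag hsqrtB).smul ?_).nonneg
  · rw [smul_mul_smul_comm, kronDiag_mul_kronDiag, CFC.sqrt_mul_sqrt_self A hA.nonneg,
      CFC.sqrt_mul_sqrt_self B hB.nonneg, ← Complex.ofReal_mul, Real.mul_self_sqrt hc]
  · exact_mod_cast Real.sqrt_nonneg c

lemma trace_mpow_half_smul_kronDiag_mul {A B : Matrix m m ℂ} (hA : A.PosSemidef)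
    (hB : B.PosSemidef) :
    trace (mpow ((1 / 2 : ℂ) • kronDiag A B) (1 / 2) *
        mpow ((1 / 2 : ℂ) • kronDiag B A) (1 / 2)) =
      trace (mpow A (1 / 2) * mpow B (1 / 2)) := by
  have hhalf : (1 / 2 : ℂ) = ((1 / 2 : ℝ) : ℂ) := by norm_num
  rw [hhalf, mpow_half_smul_kronDiag hA hB (by norm_num),
    mpow_half_smul_kronDiag hB hA (by norm_num), smul_mul_smul_comm, kronDiag_mul_kronDiag,
    trace_smul, trace_kronDiag, trace_mul_comm (mpow B _), ← Complex.ofReal_mul,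
    Real.mul_self_sqrt (by norm_num)]
  push_cast
  ring

end MatrixPower

end Matrix

theorem stmt11_general {n : ℕ} (ρ₀ ρ₁ : Matrix (Fin n) (Fin n) ℂ)
    (h₀ : ρ₀.PosSemidef) (h₁ : ρ₁.PosSemidef) :
    (⨅ s : Set.Ioo (0:ℝ) 1,
      (trace (mpow ((1/2 : ℂ) • (ρ₀ ⊗ₖ Matrix.single (0 : Fin 2) 0 (1:ℂ)
                      + ρ₁ ⊗ₖ Matrix.single (1 : Fin 2) 1 (1:ℂ))) (s : ℝ) *
              mpow ((1/2 : ℂ) • (ρ₁ ⊗ₖ Matrix.single (0 : Fin 2) 0 (1:ℂ)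
                      + ρ₀ ⊗ₖ Matrix.single (1 : Fin 2) 1 (1:ℂ))) (1 - (s : ℝ)))).re) =
    (trace (mpow ρ₀ (1/2) * mpow ρ₁ (1/2))).re := by
  set e := (Equiv.refl (Fin n)).prodCongr (Equiv.swap (0 : Fin 2) 1)
  have hswap : ∀ A B : Matrix (Fin n) (Fin n) ℂ,
      reindex e e ((1 / 2 : ℂ) • kronDiag A B) = (1 / 2 : ℂ) • kronDiag B A := fun A B => by
    rw [← coe_reindexAlgEquiv ℂ ℂ, map_smul, coe_reindexAlgEquiv, reindex_kronDiag]
  have hpsd : ∀ {A B : Matrix (Fin n) (Fin n) ℂ}, A.PosSemidef → B.PosSemidef →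
      ((1 / 2 : ℂ) • kronDiag A B).PosSemidef := fun hA hB =>
    (hA.kronDiag hB).smul (by positivity)
  have hle := re_trace_mpow_half_le_of_reindex e (hpsd h₀ h₁) (hpsd h₁ h₀) (hswap ρ₀ ρ₁)
    (hswap ρ₁ ρ₀)
  have hhalf : (1 : ℝ) - 1 / 2 = 1 / 2 := by norm_num
  change ⨅ s : Set.Ioo (0 : ℝ) 1, (trace (mpow ((1 / 2 : ℂ) • kronDiag ρ₀ ρ₁) s *
    mpow ((1 / 2 : ℂ) • kronDiag ρ₁ ρ₀) (1 - s))).re = _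
  rw [ciInf_eq_of_forall_le ⟨1 / 2, by norm_num, by norm_num⟩ fun s => by
    simpa only [hhalf] using hle s, hhalf, trace_mpow_half_smul_kronDiag_mul h₀ h₁]

/-- **Quantum Chernoff coefficient of the symmetrized states equals the pretty good
fidelity.**  For states `ρ₀, ρ₁` on a finite-dimensional Hilbert space, let
`ρ̃₀ = ½(ρ₀ ⊗ |0⟩⟨0| + ρ₁ ⊗ |1⟩⟨1|)` and `ρ̃₁ = ½(ρ₁ ⊗ |0⟩⟨0| + ρ₀ ⊗ |1⟩⟨1|)`.  Then
`Q(ρ̃₀, ρ̃₁) := inf_{0<s<1} Tr[ρ̃₀^s ρ̃₁^(1-s)] = Tr[ρ₀^(1/2) ρ₁^(1/2)] =: F_pg(ρ₀, ρ₁)`. -/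
theorem stmt11 {n : ℕ} (ρ₀ ρ₁ : Matrix (Fin n) (Fin n) ℂ)
    (h₀ : ρ₀.PosSemidef) (h₁ : ρ₁.PosSemidef)
    (h₀1 : trace ρ₀ = 1) (h₁1 : trace ρ₁ = 1) :
    (⨅ s : Set.Ioo (0:ℝ) 1,
      (trace (mpow ((1/2 : ℂ) • (ρ₀ ⊗ₖ Matrix.single (0 : Fin 2) 0 (1:ℂ)
                      + ρ₁ ⊗ₖ Matrix.single (1 : Fin 2) 1 (1:ℂ))) (s : ℝ) *
              mpow ((1/2 : ℂ) • (ρ₁ ⊗ₖ Matrix.single (0 : Fin 2) 0 (1:ℂ)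
                      + ρ₀ ⊗ₖ Matrix.single (1 : Fin 2) 1 (1:ℂ))) (1 - (s : ℝ)))).re) =
    (trace (mpow ρ₀ (1/2) * mpow ρ₁ (1/2))).re :=
  stmt11_general ρ₀ ρ₁ h₀ h₁
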